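/- arXiv:1304.0837 — 7 statements merged into one kernel-verified Lean document; each statement's English description precedes it below -/
import Mathlib

section
/- For any words v_1, v_2 ∈ Σ_k^* (possibly empty) and indices i < j, the reduced form of the group word v_1^{-1} s_i^{-1} s_j v_2 has weight exactly 1/2. Consequently, in the order defined by u > v ⇔ w(v^{-1}u) > 0, one has s_i v_2' > s_j v_1' is false and s_i v_1 < s_j v_2 holds for all positive words v_1, v_2; i.e., the order extends the lexicographic order on the free monoid Σ_k^* with s_1 < s_2 < … < s_k. -/
/-!
Inside a block of letters of one sign every length-2 factor contributes `0` to the weight, so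
the only factor that could contribute is the junction `S_i s_j`, and it contributes `0` as
well because `i < j`. The weight is therefore the `1/2` coming from the positive last letter.
-/

/-- A letter of the alphabet `Σ_k^±`: `(i, true)` is the positive letter `s_{i+1}`,
`(i, false)` is the negative letter `S_{i+1} = s_{i+1}⁻¹`. -/
abbrev Letter (k : ℕ) := Fin k × Bool

/-- A word is reduced if no two adjacent letters cancel. -/
def Reduced {k : ℕ} (u : List (Letter k)) : Prop :=
  u.Chain' fun x y => y ≠ (x.1, !x.2)

/-- Contribution of a length-2 factor `xy`:
`+1` if it has the form `s_j S_i` with `j > i`, `-1` if `S_j s_i` with `j > i`, else `0`. -/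
def pairVal {k : ℕ} (x y : Letter k) : ℤ :=
  if x.2 = true ∧ y.2 = false ∧ y.1 < x.1 then 1
  else if x.2 = false ∧ y.2 = true ∧ y.1 < x.1 then -1
  else 0

/-- Sum of contributions of all length-2 factors of a word. -/
def pairSum {k : ℕ} : List (Letter k) → ℤ
  | x :: y :: t => pairVal x y + pairSum (y :: t)
  | _ => 0

/-- `+1/2`, `-1/2`, or `0` according to the last letter. -/
def lastSign {k : ℕ} (u : List (Letter k)) : ℚ :=
  match u.getLast? with
  | none => 0
  | some x => if x.2 then 1/2 else -1/2

/-- The weight function `w` of Šunić's order. -/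
def w {k : ℕ} (u : List (Letter k)) : ℚ := pairSum u + lastSign u

section Words

variable {k : ℕ}

lemma reduced_map_prodMk_right (l : List (Fin k)) (b : Bool) :
    Reduced (l.map fun s => ((s, b) : Letter k)) := by
  rw [Reduced, List.Chain', List.isChain_map]
  induction l using List.twoStepInduction <;> simp_all

lemma pairVal_of_snd_eq {x y : Letter k} (h : x.2 = y.2) : pairVal x y = 0 := by
  rcases x with ⟨_, _ | _⟩ <;> rcases y with ⟨_, _ | _⟩ <;> simp_all [pairVal]

lemma pairSum_append_singleton_append_cons (u v : List (Letter k)) (x y : Letter k) :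
    pairSum (u ++ [x] ++ y :: v) = pairSum (u ++ [x]) + pairVal x y + pairSum (y :: v) := by
  induction u with
  | nil => simp [pairSum]
  | cons a u ih =>
    cases u with
    | nil => simp [pairSum]; ring
    | cons b u =>
      simp only [List.cons_append, List.append_assoc, pairSum] at ih ⊢
      rw [ih]
      ring

lemma pairSum_map_prodMk_right (l : List (Fin k)) (b : Bool) :
    pairSum (l.map fun s => ((s, b) : Letter k)) = 0 := by
  induction l using List.twoStepInduction <;> simp_all [pairSum, pairVal_of_snd_eq]

lemma lastSign_append_cons (u v : List (Letter k)) (y : Letter k) :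
    lastSign (u ++ y :: v) = lastSign (y :: v) := by
  rw [lastSign, lastSign, List.getLast?_append_cons]

lemma lastSign_cons_map_true (j : Fin k) (l : List (Fin k)) :
    lastSign ((j :: l).map fun s => ((s, true) : Letter k)) = 1 / 2 := by
  simp [lastSign, List.getLast?_map, List.getLast?_cons]

end Words

theorem stmt4_general (k : ℕ) (i j : Fin k) (hij : i < j)
    (v₁ v₂ : List (Fin k)) :
    Reduced ((v₁.reverse.map fun s => ((s, false) : Letter k)) ++
        [(i, false), (j, true)] ++ v₂.map fun s => ((s, true) : Letter k)) ∧
      w ((v₁.reverse.map fun s => ((s, false) : Letter k)) ++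
        [(i, false), (j, true)] ++ v₂.map fun s => ((s, true) : Letter k)) = 1/2 := by
  set neg := v₁.reverse.map fun s => ((s, false) : Letter k)
  set pos := v₂.map fun s => ((s, true) : Letter k)
  have hword : neg ++ [(i, false), (j, true)] ++ pos = neg ++ [(i, false)] ++ (j, true) :: pos := by
    simp
  have hneg : neg ++ [(i, false)] = (v₁.reverse ++ [i]).map fun s => ((s, false) : Letter k) := by
    simp [neg]
  have hpos : (j, true) :: pos = (j :: v₂).map fun s => ((s, true) : Letter k) := rfl
  constructor
  · rw [hword, hneg, hpos, Reduced, List.Chain', List.isChain_append]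
    refine ⟨reduced_map_prodMk_right _ _, reduced_map_prodMk_right _ _, ?_⟩
    simp [hij.ne']
  · rw [w, hword, pairSum_append_singleton_append_cons, lastSign_append_cons, hneg, hpos,
      pairSum_map_prodMk_right, pairSum_map_prodMk_right, lastSign_cons_map_true]
    simp [pairVal, hij.not_gt]

/-- for positive words `v₁, v₂ ∈ Σ_k^*` and indices `i < j`, the word
`v₁⁻¹ S_i s_j v₂` (which is already reduced) has weight exactly `1/2`; hence the
order `u > v ⇔ w (v⁻¹ u) > 0` extends the lexicographic order on `Σ_k^*`
(`s_1 < s_2 < ⋯ < s_k`): `s_i v₁ < s_j v₂` for all positive words `v₁, v₂`. -/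
theorem stmt4 (k : ℕ) (hk : 2 ≤ k) (i j : Fin k) (hij : i < j)
    (v₁ v₂ : List (Fin k)) :
    Reduced ((v₁.reverse.map fun s => ((s, false) : Letter k)) ++
        [(i, false), (j, true)] ++ v₂.map fun s => ((s, true) : Letter k)) ∧
      w ((v₁.reverse.map fun s => ((s, false) : Letter k)) ++
        [(i, false), (j, true)] ++ v₂.map fun s => ((s, true) : Letter k)) = 1/2 :=
  stmt4_general k i j hij v₁ v₂
end

section
/- In the left order on F_2 = F(s_1, s_2) defined by u > v ⇔ w(v^{-1}u) > 0, one has s_1 < s_1 s_1 but s_1 s_2 > s_1 s_1 s_2. Consequently this left order is not right-invariant (not a bi-order). -/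
/-- The weight transported to the free group via reduced words. -/
def W {k : ℕ} (g : FreeGroup (Fin k)) : ℚ := w g.toWord

/-- in the left order on `F₂ = F(s₁, s₂)` defined by
`u > v ⇔ W (v⁻¹ u) > 0`, one has `s₁ < s₁ s₁` but `s₁ s₂ > s₁ s₁ s₂`; hence the
order is not right-invariant. -/
theorem stmt5 :
    (0 < W ((FreeGroup.of (0 : Fin 2))⁻¹ *
        (FreeGroup.of (0 : Fin 2) * FreeGroup.of (0 : Fin 2)))) ∧
    (0 < W ((FreeGroup.of (0 : Fin 2) * FreeGroup.of (0 : Fin 2) *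
          FreeGroup.of (1 : Fin 2))⁻¹ *
        (FreeGroup.of (0 : Fin 2) * FreeGroup.of (1 : Fin 2)))) ∧
    ¬ (∀ u v g : FreeGroup (Fin 2), 0 < W (v⁻¹ * u) →
        0 < W ((v * g)⁻¹ * (u * g))) := by
  refine ⟨?_, ?_, fun h => ?_⟩
  · have hw : ((FreeGroup.of (0 : Fin 2))⁻¹ *
        (FreeGroup.of (0 : Fin 2) * FreeGroup.of (0 : Fin 2))).toWord
        = [((0 : Fin 2), true)] := rfl
    unfold W w
    rw [hw]
    norm_num [pairSum, lastSign]
  · have hw : ((FreeGroup.of (0 : Fin 2) * FreeGroup.of (0 : Fin 2) *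
          FreeGroup.of (1 : Fin 2))⁻¹ *
        (FreeGroup.of (0 : Fin 2) * FreeGroup.of (1 : Fin 2))).toWord
        = [((1 : Fin 2), false), ((0 : Fin 2), false), ((1 : Fin 2), true)] := rfl
    unfold W w
    rw [hw]
    norm_num [pairSum, pairVal, lastSign]
  · have h1 : 0 < W ((FreeGroup.of (0 : Fin 2))⁻¹ *
        (FreeGroup.of (0 : Fin 2) * FreeGroup.of (0 : Fin 2))) := by
      have hw : ((FreeGroup.of (0 : Fin 2))⁻¹ *
          (FreeGroup.of (0 : Fin 2) * FreeGroup.of (0 : Fin 2))).toWord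
          = [((0 : Fin 2), true)] := rfl
      unfold W w
      rw [hw]
      norm_num [pairSum, lastSign]
    have h2 := h (FreeGroup.of (0 : Fin 2) * FreeGroup.of (0 : Fin 2))
      (FreeGroup.of (0 : Fin 2)) (FreeGroup.of (1 : Fin 2)) h1
    have hw : ((FreeGroup.of (0 : Fin 2) * FreeGroup.of (1 : Fin 2))⁻¹ *
        (FreeGroup.of (0 : Fin 2) * FreeGroup.of (0 : Fin 2) *
          FreeGroup.of (1 : Fin 2))).toWord
        = [((1 : Fin 2), false), ((0 : Fin 2), true), ((1 : Fin 2), true)] := rfl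
    unfold W w at h2
    rw [hw] at h2
    norm_num [pairSum, pairVal, lastSign] at h2
end

section
/- Define P_k = {u ∈ F_k \ {e} : w(u) > 0} where w is the weight on reduced words. Then F_k is the disjoint union of P_k, P_k^{-1}, and {e}; that is, for every nontrivial reduced word u, exactly one of w(u) > 0 and w(u^{-1}) > 0 holds. -/
/-! Reversing a reduced word `u` negates its weight: each factor `xy` of `u` becomes the factor
`y⁻¹x⁻¹` of `u⁻¹`, and the two contributions add up to `lastSign [x] - lastSign [y]`. These
differences telescope, and the remaining boundary terms cancel against the last-letter terms of
`w u` and `w u⁻¹`. Since `2 * w u` is an odd integer for `u ≠ []`, exactly one of `W g`, `W g⁻¹`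
is positive. -/

section Weight

variable {k : ℕ}

open FreeGroup

lemma lastSign_append_singleton (l : List (Letter k)) (a : Letter k) :
    lastSign (l ++ [a]) = lastSign [a] := by
  simp [lastSign]

lemma lastSign_cons_cons (x y : Letter k) (t : List (Letter k)) :
    lastSign (x :: y :: t) = lastSign (y :: t) := by
  simp [lastSign, List.getLast?_cons_cons]

lemma lastSign_singleton_flip (x : Letter k) :
    lastSign [(x.1, !x.2)] = -lastSign [x] := by
  obtain ⟨i, _ | _⟩ := x <;> simp [lastSign] <;> norm_num

lemma pairSum_append_pair (l : List (Letter k)) (b a : Letter k) :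
    pairSum (l ++ [b, a]) = pairSum (l ++ [b]) + pairVal b a := by
  induction l with
  | nil => simp [pairSum]
  | cons c l ih =>
    rcases l with _ | ⟨d, l⟩
    · simp [pairSum]
    · simp only [List.cons_append, pairSum] at ih ⊢
      rw [ih, add_assoc]

lemma pairVal_add_pairVal_invRev (x y : Letter k) (hxy : x.1 = y.1 → x.2 = y.2) :
    (pairVal x y : ℚ) + pairVal (y.1, !y.2) (x.1, !x.2) = lastSign [x] - lastSign [y] := by
  obtain ⟨i, a⟩ := x
  obtain ⟨j, b⟩ := y
  rcases lt_trichotomy i j with hij | rfl | hij <;> cases a <;> cases b <;>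
    simp_all [pairVal, lastSign, lt_asymm] <;> norm_num

lemma pairSum_invRev {x : Letter k} {t : List (Letter k)} (hu : IsReduced (x :: t)) :
    (pairSum (invRev (x :: t)) : ℚ) = -pairSum (x :: t) + lastSign [x] - lastSign (x :: t) := by
  induction t generalizing x with
  | nil => simp [invRev, pairSum]
  | cons y s ih =>
    obtain ⟨hxy, hys⟩ := isReduced_cons_cons.mp hu
    have hinv : invRev (x :: y :: s) = invRev s ++ [(y.1, !y.2), (x.1, !x.2)] := by
      simp [invRev]
    have hinv' : invRev s ++ [(y.1, !y.2)] = invRev (y :: s) := by simp [invRev]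
    rw [hinv, pairSum_append_pair, hinv', Int.cast_add, ih hys, lastSign_cons_cons]
    have := pairVal_add_pairVal_invRev x y hxy
    simp only [pairSum, Int.cast_add]
    linarith

lemma w_invRev {u : List (Letter k)} (hu : IsReduced u) : w (invRev u) = -w u := by
  rcases u with _ | ⟨x, t⟩
  · simp [w, pairSum, lastSign]
  · have hlast : lastSign (invRev (x :: t)) = -lastSign [x] := by
      rw [show invRev (x :: t) = invRev t ++ [(x.1, !x.2)] by simp [invRev],
        lastSign_append_singleton, lastSign_singleton_flip]
    rw [w, w, pairSum_invRev hu, hlast]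
    ring

lemma w_ne_zero {u : List (Letter k)} (hu : u ≠ []) : w u ≠ 0 := by
  obtain ⟨l, ⟨i, b⟩, rfl⟩ := List.eq_nil_or_concat' u |>.resolve_left hu
  intro h
  rw [w, lastSign_append_singleton] at h
  have h2 : (2 * pairSum (l ++ [(i, b)]) : ℚ) = -(2 * lastSign [(i, b)]) := by linarith
  have hodd : 2 * pairSum (l ++ [(i, b)]) = if b then -1 else 1 := by
    cases b <;> norm_num [lastSign] at h2 ⊢ <;> exact_mod_cast h2
  split_ifs at hodd <;> omega

lemma W_inv (g : FreeGroup (Fin k)) : W g⁻¹ = -W g := by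
  rw [W, W, toWord_inv, w_invRev isReduced_toWord]

lemma W_ne_zero {g : FreeGroup (Fin k)} (hg : g ≠ 1) : W g ≠ 0 :=
  w_ne_zero (mt toWord_eq_nil_iff.mp hg)

end Weight

theorem stmt8_general (k : ℕ) (g : FreeGroup (Fin k)) (hg : g ≠ 1) :
    Xor' (0 < W g) (0 < W g⁻¹) := by
  rw [W_inv]
  rcases (W_ne_zero hg).lt_or_gt with h | h
  · exact Or.inr ⟨by linarith, h.not_gt⟩
  · exact Or.inl ⟨h, by linarith⟩

/-- `F_k` is the disjoint union of `P_k`, `P_k⁻¹` and `{e}`: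
for every nontrivial `g`, exactly one of `W g > 0` and `W g⁻¹ > 0` holds. -/
theorem stmt8 (k : ℕ) (hk : 2 ≤ k) (g : FreeGroup (Fin k)) (hg : g ≠ 1) :
    Xor' (0 < W g) (0 < W g⁻¹) :=
  stmt8_general k g hg
end

section
/- Let g_1, …, g_n (n ≥ 2) be bijections of a set X, and suppose there exist pairwise disjoint nonempty subsets A_1, …, A_n, B_1, …, B_n of X with g_i(X ∖ B_i) ⊆ A_i and g_i^{-1}(X ∖ A_i) ⊆ B_i for all i, and a point x_0 ∈ X lying outside all the A_i and B_i. Then the group generated by g_1, …, g_n acts freely on the orbit of x_0; in particular, no nontrivial reduced word in the g_i fixes x_0. -/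
/-- Action of a reduced word in the generators `g : Fin n → Equiv.Perm X` on `X`
(leftmost letter acts last). -/
def permWordAct {X : Type*} {n : ℕ} (g : Fin n → Equiv.Perm X) :
    List (Fin n × Bool) → X → X
  | [] => id
  | x :: t => (if x.2 then g x.1 else (g x.1).symm) ∘ permWordAct g t

/-- ping-pong with a free base point: if `g₁, …, g_n` are bijections
of `X` with pairwise disjoint nonempty subsets `A₁, …, A_n, B₁, …, B_n` such that
`g_i (X ∖ B_i) ⊆ A_i` and `g_i⁻¹ (X ∖ A_i) ⊆ B_i`, and `x₀` lies outside all these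
sets, then no nontrivial reduced word in the `g_i` fixes `x₀`; hence `⟨g₁, …, g_n⟩`
acts freely on the orbit of `x₀`. -/
theorem stmt11 {X : Type*} (n : ℕ) (hn : 2 ≤ n) (g : Fin n → Equiv.Perm X)
    (A B : Fin n → Set X)
    (hAne : ∀ i, (A i).Nonempty) (hBne : ∀ i, (B i).Nonempty)
    (hAA : ∀ i j, i ≠ j → Disjoint (A i) (A j))
    (hBB : ∀ i j, i ≠ j → Disjoint (B i) (B j))
    (hAB : ∀ i j, Disjoint (A i) (B j))
    (hfwd : ∀ i, g i '' (B i)ᶜ ⊆ A i)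
    (hbwd : ∀ i, (g i).symm '' (A i)ᶜ ⊆ B i)
    (x₀ : X) (hx₀ : ∀ i, x₀ ∉ A i ∧ x₀ ∉ B i)
    (u : List (Fin n × Bool)) (hne : u ≠ [])
    (hred : u.Chain' fun x y => y ≠ (x.1, !x.2)) :
    permWordAct g u x₀ ≠ x₀ := by
  -- Key: the image of x₀ under a nonempty reduced word lies in A (head) or B (head).
  have key : ∀ (t : List (Fin n × Bool)) (x : Fin n × Bool),
      (x :: t).Chain' (fun x y => y ≠ (x.1, !x.2)) →
      permWordAct g (x :: t) x₀ ∈ (if x.2 then A x.1 else B x.1) := by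
    intro t
    induction t with
    | nil =>
      intro x _
      simp only [permWordAct, Function.comp]
      cases hx : x.2 with
      | true =>
        simp only [if_pos rfl]
        exact hfwd x.1 ⟨x₀, (hx₀ x.1).2, rfl⟩
      | false =>
        simp only [hx, if_neg (Bool.false_ne_true)]
        exact hbwd x.1 ⟨x₀, (hx₀ x.1).1, rfl⟩
    | cons y t ih =>
      intro x hc
      have hc' : (y :: t).Chain' (fun x y => y ≠ (x.1, !x.2)) := hc.tail
      have hxy : y ≠ (x.1, !x.2) := (List.isChain_cons_cons.mp hc).1
      have hz := ih y hc'
      set z := permWordAct g (y :: t) x₀ with hzdef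
      simp only [permWordAct, Function.comp_apply, ← hzdef]
      cases hx2 : x.2 with
      | true =>
        simp only [if_pos rfl]
        apply hfwd x.1
        refine ⟨z, ?_, rfl⟩
        intro hzB
        cases hy2 : y.2 with
        | true =>
          rw [if_pos hy2] at hz
          exact (hAB y.1 x.1).le_bot ⟨hz, hzB⟩
        | false =>
          rw [if_neg (by simp [hy2])] at hz
          have : y.1 ≠ x.1 := by
            intro h; apply hxy; rw [hx2] at *; exact Prod.ext h (by simp [hy2])
          exact (hBB y.1 x.1 this).le_bot ⟨hz, hzB⟩
      | false =>
        simp only [hx2, if_neg (Bool.false_ne_true)]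
        apply hbwd x.1
        refine ⟨z, ?_, rfl⟩
        intro hzA
        cases hy2 : y.2 with
        | false =>
          rw [if_neg (by simp [hy2])] at hz
          exact (hAB x.1 y.1).le_bot ⟨hzA, hz⟩
        | true =>
          rw [if_pos hy2] at hz
          have : y.1 ≠ x.1 := by
            intro h; apply hxy; rw [hx2] at *; exact Prod.ext h (by simp [hy2])
          exact (hAA y.1 x.1 this).le_bot ⟨hz, hzA⟩
  obtain ⟨x, t, rfl⟩ := List.exists_cons_of_ne_nil hne
  have h := key t x hred
  intro heq
  rw [heq] at h
  cases hx : x.2 with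
  | true => rw [if_pos hx] at h; exact (hx₀ x.1).1 h
  | false => rw [if_neg (by simp [hx])] at h; exact (hx₀ x.1).2 h
end

section
/- Let a, b, c be the piecewise linear homeomorphisms of ℝ obtained by lifting the circle maps a, b, c along ℝ → ℝ/ℤ (lifts chosen with a(0), b(0), c(0) ∈ (0,1)). Then for every nontrivial reduced word u over {a,b,c}^±, the point u(0) lies in the open interval (w(u) − 1/2, w(u) + 1/2), where w(u) is the weight of u. In particular u(0) > 0 if and only if w(u) > 0. -/
/-- The equivariant lift of the basic circle map `s_0` (case `k = 3`):
`s_0(x) = x/6` on `[0, 6/7)` and `s_0(x) = 6x - 5` on `[6/7, 1)`,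
extended to `ℝ` so that `s0r (x + 1) = s0r x + 1` and `s0r 0 = 0`. -/
noncomputable def s0r (x : ℝ) : ℝ :=
  ⌊x⌋ + (if Int.fract x < 6/7 then Int.fract x / 6 else 6 * Int.fract x - 5)

/-- The equivariant lift of the inverse of `s_0`. -/
noncomputable def s0rInv (y : ℝ) : ℝ :=
  ⌊y⌋ + (if Int.fract y < 1/7 then 6 * Int.fract y else (Int.fract y + 5) / 6)

/-- The lift to `ℝ` of the circle map `s_i(x) = s_0(x + (i-1)/7) + i/7` (`i = 1, 2, 3`);
these are the generators `a`, `b`, `c`.  Each lift commutes with `x ↦ x + 1` and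
sends `0` into `(0,1)`. -/
noncomputable def liftGen (i : Fin 3) (x : ℝ) : ℝ :=
  s0r (x + (i : ℝ) / 7) + ((i : ℝ) + 1) / 7

/-- The lift to `ℝ` of the inverse circle map `s_i⁻¹`. -/
noncomputable def liftGenInv (i : Fin 3) (y : ℝ) : ℝ :=
  s0rInv (y - ((i : ℝ) + 1) / 7) - (i : ℝ) / 7

/-- Action of a letter on `ℝ`. -/
noncomputable def letterAct (x : Letter 3) : ℝ → ℝ :=
  if x.2 then liftGen x.1 else liftGenInv x.1

/-- Action of a word (leftmost letter acts last, i.e. a left action). -/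
noncomputable def wordAct : List (Letter 3) → ℝ → ℝ
  | [] => id
  | x :: t => letterAct x ∘ wordAct t

noncomputable def lo (x : Letter 3) : ℝ :=
  if x.2 then ((x.1:ℝ)+1)/7 else (6-(x.1:ℝ))/7

lemma s0r_eq (m : ℤ) (g : ℝ) (h0 : 0 ≤ g) (h1 : g < 6/7) :
    s0r ((m : ℝ) + g) = m + g / 6 := by
  have hf : Int.fract ((m:ℝ) + g) = g := by
    rw [Int.fract_intCast_add, Int.fract_eq_self.mpr ⟨h0, by linarith⟩]
  have hfl : ⌊(m:ℝ) + g⌋ = m := by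
    rw [Int.floor_intCast_add, Int.floor_eq_zero_iff.mpr ⟨h0, by linarith⟩, add_zero]
  unfold s0r
  rw [hf, hfl, if_pos h1]

lemma s0rInv_eq (m : ℤ) (g : ℝ) (h0 : 1/7 ≤ g) (h1 : g < 1) :
    s0rInv ((m : ℝ) + g) = m + (g + 5) / 6 := by
  have hf : Int.fract ((m:ℝ) + g) = g := by
    rw [Int.fract_intCast_add, Int.fract_eq_self.mpr ⟨by linarith, h1⟩]
  have hfl : ⌊(m:ℝ) + g⌋ = m := by
    rw [Int.floor_intCast_add, Int.floor_eq_zero_iff.mpr ⟨by linarith, h1⟩, add_zero]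
  unfold s0rInv
  rw [hf, hfl, if_neg (by linarith)]

lemma step_pos (i : Fin 3) (p : ℝ) (m c : ℤ)
    (h1 : (c:ℝ) ≤ p - m + (i:ℝ)/7) (h2 : p - m + (i:ℝ)/7 < c + 6/7) :
    liftGen i p ∈ Set.Ico (((m:ℝ) + c) + ((i:ℝ)+1)/7) (((m:ℝ) + c) + ((i:ℝ)+1)/7 + 1/7) := by
  have hp : p + (i:ℝ)/7 = ((m + c : ℤ) : ℝ) + (p - m + (i:ℝ)/7 - c) := by push_cast; ring
  unfold liftGen
  rw [hp, s0r_eq _ _ (by linarith) (by linarith)]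
  push_cast
  constructor
  · linarith
  · linarith

lemma step_neg (i : Fin 3) (p : ℝ) (m c : ℤ)
    (h1 : (c:ℝ) + 1/7 ≤ p - m - ((i:ℝ)+1)/7) (h2 : p - m - ((i:ℝ)+1)/7 < c + 1) :
    liftGenInv i p ∈ Set.Ico (((m:ℝ) + c) + (6-(i:ℝ))/7) (((m:ℝ) + c) + (6-(i:ℝ))/7 + 1/7) := by
  have hp : p - ((i:ℝ)+1)/7 = ((m + c : ℤ) : ℝ) + (p - m - ((i:ℝ)+1)/7 - c) := by
    push_cast; ring
  unfold liftGenInv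
  rw [hp, s0rInv_eq _ _ (by linarith) (by linarith)]
  push_cast
  constructor
  · linarith
  · linarith

lemma w_cons_cons (x y : Letter 3) (t : List (Letter 3)) :
    w (x :: y :: t) = pairVal x y + w (y :: t) := by
  unfold w lastSign
  rw [List.getLast?_cons_cons]
  have : pairSum (x :: y :: t) = pairVal x y + pairSum (y :: t) := rfl
  rw [this]
  push_cast
  ring

lemma fin_le2 (i : Fin 3) : ((i:ℕ):ℝ) ≤ 2 := by
  have := i.is_lt
  exact_mod_cast Nat.lt_succ_iff.mp this

lemma fin_lt_real {i j : Fin 3} (h : i < j) : ((i:ℕ):ℝ) + 1 ≤ ((j:ℕ):ℝ) := by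
  have : (i:ℕ) + 1 ≤ (j:ℕ) := h
  exact_mod_cast this

lemma key : ∀ (t : List (Letter 3)) (x : Letter 3), Reduced (x :: t) →
    ∃ n : ℤ, ((n : ℚ) + 1/2 = w (x :: t)) ∧
      wordAct (x :: t) 0 ∈ Set.Ico ((n:ℝ) + lo x) ((n:ℝ) + lo x + 1/7) := by
  intro t
  induction t with
  | nil =>
    intro x _
    obtain ⟨i, ε⟩ := x
    have hi0 : (0:ℝ) ≤ ((i:ℕ):ℝ) := by positivity
    have hi2 := fin_le2 i
    have hact : wordAct [(i, ε)] 0 = letterAct (i, ε) 0 := rfl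
    cases ε
    · refine ⟨-1, ?_, ?_⟩
      · simp [w, lastSign]
        norm_num
        rfl
      · have h := step_neg i 0 0 (-1) (by push_cast; linarith) (by push_cast; linarith)
        rw [hact]
        simp only [letterAct, lo]
        norm_num
        norm_num at h
        convert h using 2 <;> ring
    · refine ⟨0, ?_, ?_⟩
      · simp [w, lastSign]
        norm_num
        rfl
      · have h := step_pos i 0 0 0 (by push_cast; linarith) (by push_cast; linarith)
        rw [hact]
        simp only [letterAct, lo]
        norm_num
        norm_num at h
        convert h using 2 <;> ring
  | cons y t' ih =>
    intro x hred
    obtain ⟨hxy, hred'⟩ := List.isChain_cons_cons.mp hred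
    obtain ⟨n, hw, hp1, hp2⟩ := ih y hred'
    set p := wordAct (y :: t') 0 with hpdef
    have hact : wordAct (x :: y :: t') 0 = letterAct x p := rfl
    obtain ⟨i, ε⟩ := x
    obtain ⟨j, δ⟩ := y
    have hi0 : (0:ℝ) ≤ ((i:ℕ):ℝ) := by positivity
    have hj0 : (0:ℝ) ≤ ((j:ℕ):ℝ) := by positivity
    have hi2 := fin_le2 i
    have hj2 := fin_le2 j
    refine ⟨n + pairVal (i,ε) (j,δ), ?_, ?_⟩
    · rw [w_cons_cons]
      push_cast
      linarith [hw]
    · rw [hact]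
      -- now case analysis
      cases ε <;> cases δ
      · -- x = (i, false), y = (j, false) : c = 0
        have hc : pairVal ((i : Fin 3), false) ((j : Fin 3), false) = 0 := by
          simp [pairVal]
        rw [hc]
        simp only [lo] at hp1 hp2
        norm_num at hp1 hp2
        have h := step_neg i p n 0 (by push_cast; linarith) (by push_cast; linarith)
        simp only [letterAct, lo]
        norm_num
        push_cast at h ⊢
        exact ⟨by linarith [h.1], by linarith [h.2]⟩
      · -- x = (i, false), y = (j, true) : j ≠ i
        have hji : j ≠ i := by
          intro hji; exact hxy (by rw [hji]; rfl)
        simp only [lo] at hp1 hp2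
        norm_num at hp1 hp2
        rcases lt_or_gt_of_ne hji with hlt | hgt
        · -- j < i : c = -1
          have hc : pairVal ((i : Fin 3), false) ((j : Fin 3), true) = -1 := by
            simp [pairVal, hlt]
          rw [hc]
          have hcast := fin_lt_real hlt
          have h := step_neg i p n (-1) (by push_cast; linarith) (by push_cast; linarith)
          simp only [letterAct, lo]
          norm_num
          push_cast at h ⊢
          exact ⟨by linarith [h.1], by linarith [h.2]⟩
        · -- i < j : c = 0
          have hc : pairVal ((i : Fin 3), false) ((j : Fin 3), true) = 0 := by
            simp [pairVal, not_lt_of_gt hgt]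
          rw [hc]
          have hcast := fin_lt_real hgt
          have h := step_neg i p n 0 (by push_cast; linarith) (by push_cast; linarith)
          simp only [letterAct, lo]
          norm_num
          push_cast at h ⊢
          exact ⟨by linarith [h.1], by linarith [h.2]⟩
      · -- x = (i, true), y = (j, false) : j ≠ i
        have hji : j ≠ i := by
          intro hji; exact hxy (by rw [hji]; rfl)
        simp only [lo] at hp1 hp2
        norm_num at hp1 hp2
        rcases lt_or_gt_of_ne hji with hlt | hgt
        · -- j < i : c = 1
          have hc : pairVal ((i : Fin 3), true) ((j : Fin 3), false) = 1 := by
            simp [pairVal, hlt]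
          rw [hc]
          have hcast := fin_lt_real hlt
          have h := step_pos i p n 1 (by push_cast; linarith) (by push_cast; linarith)
          simp only [letterAct, lo]
          norm_num
          push_cast at h ⊢
          exact ⟨by linarith [h.1], by linarith [h.2]⟩
        · -- i < j : c = 0
          have hc : pairVal ((i : Fin 3), true) ((j : Fin 3), false) = 0 := by
            simp [pairVal, not_lt_of_gt hgt]
          rw [hc]
          have hcast := fin_lt_real hgt
          have h := step_pos i p n 0 (by push_cast; linarith) (by push_cast; linarith)
          simp only [letterAct, lo]
          norm_num
          push_cast at h ⊢
          exact ⟨by linarith [h.1], by linarith [h.2]⟩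
      · -- x = (i, true), y = (j, true) : c = 0
        have hc : pairVal ((i : Fin 3), true) ((j : Fin 3), true) = 0 := by
          simp [pairVal]
        rw [hc]
        simp only [lo] at hp1 hp2
        norm_num at hp1 hp2
        have h := step_pos i p n 0 (by push_cast; linarith) (by push_cast; linarith)
        simp only [letterAct, lo]
        norm_num
        push_cast at h ⊢
        exact ⟨by linarith [h.1], by linarith [h.2]⟩

lemma lo_bounds (x : Letter 3) : 1/7 ≤ lo x ∧ lo x + 1/7 ≤ 1 := by
  obtain ⟨i, ε⟩ := x
  have hi0 : (0:ℝ) ≤ ((i:ℕ):ℝ) := by positivity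
  have hi2 := fin_le2 i
  cases ε <;> simp [lo] <;> constructor <;> linarith

/-- for every nontrivial reduced word `u` over `{a, b, c}^±` (the
lifted PL homeomorphisms of `ℝ`), the point `u(0)` lies in
`(w u - 1/2, w u + 1/2)`; in particular `u(0) > 0 ↔ w u > 0`. -/
theorem stmt12 (u : List (Letter 3)) (hne : u ≠ []) (hred : Reduced u) :
    wordAct u 0 ∈ Set.Ioo ((w u : ℝ) - 1/2) ((w u : ℝ) + 1/2) ∧
      (0 < wordAct u 0 ↔ 0 < w u) := by
  cases u with
  | nil => exact absurd rfl hne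
  | cons x t =>
    obtain ⟨n, hw, hp1, hp2⟩ := key t x hred
    obtain ⟨hlo1, hlo2⟩ := lo_bounds x
    have hw' : w (x :: t) = (n:ℚ) + 1/2 := hw.symm
    have hwr : ((w (x :: t) : ℚ) : ℝ) = (n:ℝ) + 1/2 := by
      rw [hw']; push_cast; ring
    refine ⟨⟨by rw [hwr]; linarith, by rw [hwr]; linarith⟩, ?_⟩
    constructor
    · intro h
      have h1 : (-1:ℝ) < (n:ℝ) := by linarith
      have h2 : (-1:ℤ) < n := by exact_mod_cast h1
      have h3 : (0:ℚ) ≤ (n:ℚ) := by exact_mod_cast h2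
      rw [← hw]; linarith
    · intro h
      rw [← hw] at h
      have h2 : (-1:ℚ) < 2 * (n:ℚ) := by linarith
      have h3 : (0:ℤ) ≤ n := by
        have : (-1:ℤ) < 2 * n := by exact_mod_cast h2
        omega
      have h4 : (0:ℝ) ≤ (n:ℝ) := by exact_mod_cast h3
      linarith
end

section
/- The positive cone P_k ⊆ (Σ_k^±)*, consisting of all reduced words u with w(u) > 0, is a context-free language over the alphabet Σ_k^± = {s_1,…,s_k, S_1,…,S_k}. -/
/-!
Write `n = pairSum u`. Since `w u = n ± 1/2` according to the last letter, `w u > 0` iff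
`n ≥ 1`, or `n = 0` and `u` ends in a positive letter. Now `n` is a one-counter walk whose steps,
in `{-1, 0, 1}`, are determined by pairs of adjacent letters, and the grammar tracks it with
nonterminals that remember the first and last letter of the word they generate: `zero a b` for
reduced walks of sum `0`, decomposed at a step that brings the counter back after the first
step, and `nonneg a b` for reduced walks of sum `≥ 0`, split at a step up from level `0`. Such
steps exist because a counter moving by at most one at a time cannot jump over a level.
-/

namespace List

variable {α : Type*} (v : α → α → ℤ)

def edgeSum : List α → ℤ
  | x :: y :: t => v x y + edgeSum (y :: t)
  | _ => 0

@[simp] lemma edgeSum_nil : edgeSum v [] = 0 := rfl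

@[simp] lemma edgeSum_singleton (x : α) : edgeSum v [x] = 0 := rfl

@[simp] lemma edgeSum_cons_cons (x y : α) (t : List α) :
    edgeSum v (x :: y :: t) = v x y + edgeSum v (y :: t) := rfl

lemma edgeSum_neg : ∀ u : List α, edgeSum (fun x y => -v x y) u = -edgeSum v u
  | x :: y :: t => by simp only [edgeSum_cons_cons, edgeSum_neg (y :: t)]; ring
  | [] | [_] => rfl

lemma edgeSum_append {x y : α} :
    ∀ {u₁ u₂ : List α}, u₁.getLast? = some x → u₂.head? = some y →
      edgeSum v (u₁ ++ u₂) = edgeSum v u₁ + v x y + edgeSum v u₂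
  | [], _, hx, _ => by simp at hx
  | [a], y' :: t, hx, hy => by
    simp only [getLast?_singleton, Option.some.injEq, head?_cons] at hx hy
    subst hx hy
    simp
  | a :: b :: s, u₂, hx, hy => by
    rw [getLast?_cons_cons] at hx
    show edgeSum v (a :: b :: (s ++ u₂)) = _
    rw [edgeSum_cons_cons, ← cons_append, edgeSum_append hx hy, edgeSum_cons_cons]
    ring
  | [_], [], _, hy => by simp at hy

lemma exists_split_edgeSum_eq_of_edgeSum_lt (hv : ∀ x y, -1 ≤ v x y) :
    ∀ {u : List α} {m : ℤ}, m ≤ 0 → edgeSum v u < m →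
      ∃ u₁ u₂ x y, u = u₁ ++ u₂ ∧ u₁.getLast? = some x ∧ u₂.head? = some y ∧
        edgeSum v u₁ = m ∧ v x y = -1
  | [], _, hm, h | [_], _, hm, h => by simp at h; omega
  | a :: b :: t, m, hm, h => by
    rw [edgeSum_cons_cons] at h
    by_cases hstep : m = 0 ∧ v a b = -1
    · exact ⟨[a], b :: t, a, b, rfl, rfl, rfl, by simp [hstep.1], hstep.2⟩
    obtain ⟨u₁, u₂, x, y, hsplit, hx, hy, hsum, hxy⟩ :=
      exists_split_edgeSum_eq_of_edgeSum_lt hv (u := b :: t) (m := m - v a b)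
        (by have := hv a b; omega) (by omega)
    have hne : u₁ ≠ [] := by rintro rfl; simp at hx
    have hhead : u₁.head? = some b := by rw [← head?_append_of_ne_nil u₁ hne, ← hsplit]; rfl
    refine ⟨a :: u₁, u₂, x, y, by rw [cons_append, ← hsplit], by simp [getLast?_cons, hx],
      hy, ?_, hxy⟩
    rw [← singleton_append, edgeSum_append v rfl hhead, hsum]
    simp

lemma exists_split_of_edgeSum_ne_zero (hv : ∀ x y, -1 ≤ v x y ∧ v x y ≤ 1)
    {u : List α} (h : edgeSum v u ≠ 0) :
    ∃ u₁ u₂ x y, u = u₁ ++ u₂ ∧ u₁.getLast? = some x ∧ u₂.head? = some y ∧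
      edgeSum v u₁ = 0 ∧ v x y = (edgeSum v u).sign := by
  rcases h.lt_or_gt with hneg | hpos
  · rw [Int.sign_eq_neg_one_of_neg hneg]
    exact exists_split_edgeSum_eq_of_edgeSum_lt v (fun x y => (hv x y).1) le_rfl hneg
  · have hneg : edgeSum (fun x y => -v x y) u < 0 := by rw [edgeSum_neg]; omega
    obtain ⟨u₁, u₂, x, y, hsplit, hx, hy, hsum, hxy⟩ :=
      exists_split_edgeSum_eq_of_edgeSum_lt _ (fun x y => neg_le_neg (hv x y).2) le_rfl hneg
    rw [edgeSum_neg] at hsum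
    rw [Int.sign_eq_one_of_pos hpos]
    exact ⟨u₁, u₂, x, y, hsplit, hx, hy, by omega, by omega⟩

end List

namespace ContextFreeGrammar

variable {T : Type*}

section formLanguage

variable {N : Type*} (S : N → Language T)

def symbolLanguage : Symbol T N → Language T
  | .terminal t => {[t]}
  | .nonterminal n => S n

def formLanguage (σ : List (Symbol T N)) : Language T :=
  (σ.map (symbolLanguage S)).prod

@[simp] lemma formLanguage_nil : formLanguage S [] = 1 := rfl

@[simp] lemma formLanguage_cons (s : Symbol T N) (σ : List (Symbol T N)) :
    formLanguage S (s :: σ) = symbolLanguage S s * formLanguage S σ := by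
  simp [formLanguage]

@[simp] lemma symbolLanguage_terminal (t : T) : symbolLanguage S (.terminal t) = {[t]} := rfl

@[simp] lemma symbolLanguage_nonterminal (n : N) : symbolLanguage S (.nonterminal n) = S n := rfl

lemma formLanguage_append (σ τ : List (Symbol T N)) :
    formLanguage S (σ ++ τ) = formLanguage S σ * formLanguage S τ := by
  simp [formLanguage]

lemma mem_formLanguage_map_terminal (u : List T) :
    u ∈ formLanguage S (u.map Symbol.terminal) := by
  induction u with
  | nil => exact (Language.mem_one _).mpr rfl
  | cons a u ih => exact Language.append_mem_mul (l := {[a]}) rfl ih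

end formLanguage

variable (g : ContextFreeGrammar T)

def derivedLanguage (n : g.NT) : Language T :=
  {u | g.Derives [.nonterminal n] (u.map .terminal)}

lemma derives_of_mem_formLanguage :
    ∀ {σ : List (Symbol T g.NT)} {u : List T},
      u ∈ formLanguage g.derivedLanguage σ → g.Derives σ (u.map .terminal)
  | [], u, hu => by rw [(Language.mem_one u).mp hu]; rfl
  | s :: σ, _, hu => by
    obtain ⟨u₁, hu₁, u₂, hu₂, rfl⟩ := Language.mem_mul.mp hu
    have hs : g.Derives [s] (u₁.map .terminal) := by
      cases s with
      | terminal t => rw [show u₁ = [t] from hu₁]; rfl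
      | nonterminal n => exact hu₁
    rw [List.map_append]
    exact (hs.append_right σ).trans ((derives_of_mem_formLanguage hu₂).append_left _)

lemma formLanguage_derivedLanguage_le {r : ContextFreeRule T g.NT} (hr : r ∈ g.rules) :
    formLanguage g.derivedLanguage r.output ≤ g.derivedLanguage r.input := fun _ hu =>
  (Produces.single ⟨r, hr, .input_output⟩).trans (g.derives_of_mem_formLanguage hu)

lemma formLanguage_anti_of_derives (S : g.NT → Language T)
    (hS : ∀ r ∈ g.rules, formLanguage S r.output ≤ S r.input) {σ τ : List (Symbol T g.NT)}
    (h : g.Derives σ τ) : formLanguage S τ ≤ formLanguage S σ := by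
  induction h with
  | refl => rfl
  | tail _ hstep ih =>
    obtain ⟨r, hr, hrw⟩ := hstep
    obtain ⟨p, q, rfl, rfl⟩ := hrw.exists_parts
    refine le_trans ?_ ih
    simp only [formLanguage_append, formLanguage_cons, formLanguage_nil, mul_one,
      symbolLanguage_nonterminal]
    exact mul_le_mul' (mul_le_mul' le_rfl (hS r hr)) le_rfl

lemma language_le_of_rules (S : g.NT → Language T)
    (hS : ∀ r ∈ g.rules, formLanguage S r.output ≤ S r.input) : g.language ≤ S g.initial :=
  fun u hu => by
    simpa using g.formLanguage_anti_of_derives S hS hu (mem_formLanguage_map_terminal S u)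

end ContextFreeGrammar

namespace OneCounter

open List ContextFreeGrammar

section Walk

variable {α : Type*} (R : α → α → Prop)

def IsWalk (a b : α) (u : List α) : Prop :=
  u.IsChain R ∧ u.head? = some a ∧ u.getLast? = some b

variable {R}

lemma isWalk_singleton (a : α) : IsWalk R a a [a] := ⟨isChain_singleton a, rfl, rfl⟩

lemma IsWalk.ne_nil {a b : α} {u : List α} (h : IsWalk R a b u) : u ≠ [] := by
  rintro rfl; simp [IsWalk] at h

lemma IsWalk.append {a b x y : α} {u₁ u₂ : List α} (h₁ : IsWalk R a x u₁) (hxy : R x y)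
    (h₂ : IsWalk R y b u₂) : IsWalk R a b (u₁ ++ u₂) := by
  refine ⟨isChain_append.mpr ⟨h₁.1, h₂.1, ?_⟩, ?_, ?_⟩
  · simp [h₁.2.2, h₂.2.1, hxy]
  · rw [head?_append_of_ne_nil _ h₁.ne_nil, h₁.2.1]
  · rw [getLast?_append_of_ne_nil _ h₂.ne_nil, h₂.2.2]

lemma IsWalk.of_append {a b x y : α} {u₁ u₂ : List α} (h : IsWalk R a b (u₁ ++ u₂))
    (hx : u₁.getLast? = some x) (hy : u₂.head? = some y) :
    IsWalk R a x u₁ ∧ R x y ∧ IsWalk R y b u₂ := by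
  have hne₁ : u₁ ≠ [] := by rintro rfl; simp at hx
  have hne₂ : u₂ ≠ [] := by rintro rfl; simp at hy
  obtain ⟨hchain, ha, hb⟩ := h
  obtain ⟨hc₁, hc₂, hjoin⟩ := isChain_append.mp hchain
  rw [head?_append_of_ne_nil _ hne₁] at ha
  rw [getLast?_append_of_ne_nil _ hne₂] at hb
  exact ⟨⟨hc₁, ha, hx⟩, hjoin x hx y hy, ⟨hc₂, hy, hb⟩⟩

lemma exists_isWalk {u : List α} (hu : u.IsChain R) (hne : u ≠ []) : ∃ a b, IsWalk R a b u :=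
  ⟨u.head hne, u.getLast hne, hu, head?_eq_some_head hne, getLast?_eq_some_getLast hne⟩

variable (v : α → α → ℤ)

lemma IsWalk.edgeSum_append {a b x y : α} {u₁ u₂ : List α} (h₁ : IsWalk R a x u₁)
    (h₂ : IsWalk R y b u₂) :
    edgeSum v (u₁ ++ u₂) = edgeSum v u₁ + v x y + edgeSum v u₂ :=
  List.edgeSum_append v h₁.2.2 h₂.2.1

lemma IsWalk.exists_split_of_edgeSum_ne_zero (hv : ∀ x y, -1 ≤ v x y ∧ v x y ≤ 1)
    {a b : α} {u : List α} (hu : IsWalk R a b u) (h : edgeSum v u ≠ 0) :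
    ∃ u₁ u₂ x y, u = u₁ ++ u₂ ∧ IsWalk R a x u₁ ∧ R x y ∧ IsWalk R y b u₂ ∧
      edgeSum v u₁ = 0 ∧ v x y = (edgeSum v u).sign ∧
      edgeSum v u₂ = edgeSum v u - (edgeSum v u).sign := by
  obtain ⟨u₁, u₂, x, y, rfl, hx, hy, hsum, hxy⟩ :=
    List.exists_split_of_edgeSum_ne_zero v hv h
  obtain ⟨hw₁, hr, hw₂⟩ := hu.of_append hx hy
  refine ⟨u₁, u₂, x, y, rfl, hw₁, hr, hw₂, hsum, hxy, ?_⟩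
  rw [← hxy, hw₁.edgeSum_append v hw₂, hsum]
  ring

end Walk

variable {α : Type} (R : α → α → Prop) (v : α → α → ℤ) (p : α → Prop)

inductive Nonterminal (α : Type) : Type
  | start
  | zero (a b : α)
  | nonneg (a b : α)
  deriving Fintype

def positiveCone : Language α :=
  {u | u.IsChain R ∧ (0 < edgeSum v u ∨ edgeSum v u = 0 ∧ ∃ b ∈ u.getLast?, p b)}

def intendedLanguage : Nonterminal α → Language α
  | .start => positiveCone R v p
  | .zero a b => {u | IsWalk R a b u ∧ edgeSum v u = 0}
  | .nonneg a b => {u | IsWalk R a b u ∧ 0 ≤ edgeSum v u}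

/-- A zero-sum walk is a single letter, or starts with a flat step, or its first step is undone
by a later step, across which the rest of the walk splits into two zero-sum walks. -/
inductive IsRule : ContextFreeRule α (Nonterminal α) → Prop
  | single (a : α) : IsRule ⟨.zero a a, [.terminal a]⟩
  | flat (a y b : α) : R a y → v a y = 0 →
      IsRule ⟨.zero a b, [.terminal a, .nonterminal (.zero y b)]⟩
  | peak (a y x y' b : α) : R a y → R x y' → v a y + v x y' = 0 →
      IsRule ⟨.zero a b, [.terminal a, .nonterminal (.zero y x), .nonterminal (.zero y' b)]⟩
  | nonneg_zero (a b : α) : IsRule ⟨.nonneg a b, [.nonterminal (.zero a b)]⟩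
  | nonneg_step (a x y b : α) : R x y → v x y = 1 →
      IsRule ⟨.nonneg a b, [.nonterminal (.zero a x), .nonterminal (.nonneg y b)]⟩
  | start_zero (a b : α) : p b → IsRule ⟨.start, [.nonterminal (.zero a b)]⟩
  | start_step (a x y b : α) : R x y → v x y = 1 →
      IsRule ⟨.start, [.nonterminal (.zero a x), .nonterminal (.nonneg y b)]⟩

lemma isRule_sound {r : ContextFreeRule α (Nonterminal α)} (hr : IsRule R v p r) :
    formLanguage (intendedLanguage R v p) r.output ≤ intendedLanguage R v p r.input := by
  intro u hu
  cases hr <;> simp only [formLanguage_cons, formLanguage_nil, mul_one, symbolLanguage_terminal,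
    symbolLanguage_nonterminal] at hu
  case single a =>
    obtain rfl : u = [a] := hu
    exact ⟨isWalk_singleton a, rfl⟩
  case flat a y b hay hflat =>
    obtain ⟨_, rfl, u₁, ⟨hw, hs⟩, rfl⟩ := Language.mem_mul.mp hu
    refine ⟨(isWalk_singleton a).append hay hw, ?_⟩
    rw [(isWalk_singleton a).edgeSum_append v hw, hflat, hs]
    rfl
  case peak a y x y' b hay hxy hcancel =>
    obtain ⟨_, rfl, _, hu', rfl⟩ := Language.mem_mul.mp hu
    obtain ⟨u₁, ⟨hw₁, hs₁⟩, u₂, ⟨hw₂, hs₂⟩, rfl⟩ := Language.mem_mul.mp hu'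
    have hw := hw₁.append hxy hw₂
    refine ⟨(isWalk_singleton a).append hay hw, ?_⟩
    rw [(isWalk_singleton a).edgeSum_append v hw, hw₁.edgeSum_append v hw₂]
    simp only [edgeSum_singleton]
    omega
  case nonneg_zero a b => exact ⟨hu.1, hu.2.ge⟩
  case nonneg_step a x y b hxy hup =>
    obtain ⟨u₁, ⟨hw₁, hs₁⟩, u₂, ⟨hw₂, hs₂⟩, rfl⟩ := Language.mem_mul.mp hu
    refine ⟨hw₁.append hxy hw₂, ?_⟩
    rw [hw₁.edgeSum_append v hw₂]
    omega
  case start_zero a b hb =>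
    obtain ⟨⟨hchain, -, hlast⟩, hs⟩ := hu
    exact ⟨hchain, .inr ⟨hs, b, hlast, hb⟩⟩
  case start_step a x y b hxy hup =>
    obtain ⟨u₁, ⟨hw₁, hs₁⟩, u₂, ⟨hw₂, hs₂⟩, rfl⟩ := Language.mem_mul.mp hu
    refine ⟨(hw₁.append hxy hw₂).1, .inl ?_⟩
    rw [hw₁.edgeSum_append v hw₂]
    omega

variable [Fintype α]

lemma finite_setOf_isRule : {r | IsRule R v p r}.Finite := by
  have hfin := ((Set.finite_univ (α := Nonterminal α)).prod
    (List.finite_length_le (Symbol α (Nonterminal α)) 3)).preimage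
    (f := fun r : ContextFreeRule α (Nonterminal α) => (r.input, r.output))
    fun r _ s _ h => ContextFreeRule.ext (congrArg Prod.fst h) (congrArg Prod.snd h)
  refine hfin.subset fun r hr => ?_
  cases hr <;> simp

-- Reducible, so that `simp` sees `(grammar R v p).NT` as `Nonterminal α`.
noncomputable abbrev grammar : ContextFreeGrammar α where
  NT := Nonterminal α
  initial := .start
  rules := (finite_setOf_isRule R v p).toFinset

variable {R v p}

lemma mem_derivedLanguage_of_isRule {A : Nonterminal α} {σ : List (Symbol α (Nonterminal α))}
    (hr : IsRule R v p ⟨A, σ⟩) {u : List α}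
    (hu : u ∈ formLanguage (grammar R v p).derivedLanguage σ) :
    u ∈ (grammar R v p).derivedLanguage A :=
  (grammar R v p).formLanguage_derivedLanguage_le ((Set.Finite.mem_toFinset _).mpr hr) hu

lemma mem_derivedLanguage_zero (hv : ∀ x y, -1 ≤ v x y ∧ v x y ≤ 1) :
    ∀ (u : List α) {a b : α}, IsWalk R a b u → edgeSum v u = 0 →
    u ∈ (grammar R v p).derivedLanguage (.zero a b)
  | [], _, _, hw, _ => absurd rfl hw.ne_nil
  | [c], a, b, ⟨_, ha, hb⟩, _ => by
    obtain rfl : c = a := Option.some.inj ha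
    obtain rfl : c = b := Option.some.inj hb
    refine mem_derivedLanguage_of_isRule (.single c) ?_
    simp only [formLanguage_cons, formLanguage_nil, mul_one, symbolLanguage_terminal]
    rfl
  | c :: y :: t, a, b, hw, hs => by
    obtain rfl : c = a := Option.some.inj hw.2.1
    obtain ⟨-, hay, hw'⟩ := hw.of_append (u₁ := [c]) (u₂ := y :: t) rfl rfl
    rw [edgeSum_cons_cons] at hs
    by_cases hflat : v c y = 0
    · refine mem_derivedLanguage_of_isRule (.flat c y b hay hflat) ?_
      simp only [formLanguage_cons, formLanguage_nil, mul_one, symbolLanguage_terminal,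
        symbolLanguage_nonterminal]
      exact Language.append_mem_mul (l := {[c]}) rfl
        (mem_derivedLanguage_zero hv (y :: t) hw' (by omega))
    · obtain ⟨u₁, u₂, x, y', hsplit, hw₁, hxy, hw₂, hs₁, hup, hs₂⟩ :=
        hw'.exists_split_of_edgeSum_ne_zero v hv (by omega)
      have hsign : (edgeSum v (y :: t)).sign = -v c y := by
        rw [show edgeSum v (y :: t) = -v c y by omega]
        rcases (by have := hv c y; omega : v c y = 1 ∨ v c y = -1) with h | h <;> simp [h]
      refine mem_derivedLanguage_of_isRule (.peak c y x y' b hay hxy (by omega)) ?_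
      simp only [formLanguage_cons, formLanguage_nil, mul_one, symbolLanguage_terminal,
        symbolLanguage_nonterminal]
      rw [hsplit]
      exact Language.append_mem_mul (l := {[c]}) rfl <|
        Language.append_mem_mul (mem_derivedLanguage_zero hv u₁ hw₁ hs₁)
          (mem_derivedLanguage_zero hv u₂ hw₂ (by omega))
termination_by u => u.length
decreasing_by
  · simp
  all_goals
    have := congrArg length hsplit
    simp only [length_cons, length_append] at this ⊢
    omega

lemma mem_derivedLanguage_nonneg (hv : ∀ x y, -1 ≤ v x y ∧ v x y ≤ 1) :
    ∀ (u : List α) {a b : α}, IsWalk R a b u →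
    0 ≤ edgeSum v u → u ∈ (grammar R v p).derivedLanguage (.nonneg a b)
  | u, a, b, hw, hs => by
    rcases hs.eq_or_lt with hzero | hpos
    · refine mem_derivedLanguage_of_isRule (.nonneg_zero a b) ?_
      simpa using mem_derivedLanguage_zero hv u hw hzero.symm
    · obtain ⟨u₁, u₂, x, y, hsplit, hw₁, hxy, hw₂, hs₁, hup, hs₂⟩ :=
        hw.exists_split_of_edgeSum_ne_zero v hv hpos.ne'
      rw [Int.sign_eq_one_of_pos hpos] at hup hs₂
      refine mem_derivedLanguage_of_isRule (.nonneg_step a x y b hxy hup) ?_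
      simp only [formLanguage_cons, formLanguage_nil, mul_one, symbolLanguage_nonterminal]
      rw [hsplit]
      exact Language.append_mem_mul (mem_derivedLanguage_zero hv u₁ hw₁ hs₁)
        (mem_derivedLanguage_nonneg hv u₂ hw₂ (by omega))
termination_by u => u.length
decreasing_by
  have hlen := congrArg length hsplit
  have := length_pos_iff.mpr hw₁.ne_nil
  rw [length_append] at hlen
  omega

lemma positiveCone_le_derivedLanguage (hv : ∀ x y, -1 ≤ v x y ∧ v x y ≤ 1) :
    positiveCone R v p ≤ (grammar R v p).derivedLanguage .start := by
  rintro u ⟨hchain, hpos | ⟨hzero, b, hb, hpb⟩⟩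
  · obtain ⟨a, b, hw⟩ := exists_isWalk hchain (by rintro rfl; simp at hpos)
    obtain ⟨u₁, u₂, x, y, rfl, hw₁, hxy, hw₂, hs₁, hup, hs₂⟩ :=
      hw.exists_split_of_edgeSum_ne_zero v hv hpos.ne'
    rw [Int.sign_eq_one_of_pos hpos] at hup hs₂
    refine mem_derivedLanguage_of_isRule (.start_step a x y b hxy hup) ?_
    simp only [formLanguage_cons, formLanguage_nil, mul_one, symbolLanguage_nonterminal]
    exact Language.append_mem_mul (mem_derivedLanguage_zero hv u₁ hw₁ hs₁)
      (mem_derivedLanguage_nonneg hv u₂ hw₂ (by omega))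
  · obtain ⟨a, b', hw⟩ := exists_isWalk hchain (by rintro rfl; simp at hb)
    obtain rfl : b' = b := Option.some.inj (hw.2.2.symm.trans hb)
    refine mem_derivedLanguage_of_isRule (.start_zero a b' hpb) ?_
    simpa using mem_derivedLanguage_zero hv u hw hzero

lemma language_grammar (hv : ∀ x y, -1 ≤ v x y ∧ v x y ≤ 1) :
    (grammar R v p).language = positiveCone R v p :=
  le_antisymm
    ((grammar R v p).language_le_of_rules (intendedLanguage R v p)
      fun _ hr => isRule_sound R v p ((Set.Finite.mem_toFinset _).mp hr))
    (positiveCone_le_derivedLanguage hv)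

theorem isContextFree_positiveCone (hv : ∀ x y, -1 ≤ v x y ∧ v x y ≤ 1) :
    (positiveCone R v p).IsContextFree :=
  ⟨grammar R v p, language_grammar hv⟩

end OneCounter

section WeightFunction

open List

variable {k : ℕ}

lemma pairSum_eq_edgeSum : ∀ u : List (Letter k), pairSum u = edgeSum pairVal u
  | x :: y :: t => by rw [pairSum, edgeSum_cons_cons, pairSum_eq_edgeSum (y :: t)]
  | [] | [_] => rfl

lemma pairVal_mem_Icc (x y : Letter k) : -1 ≤ pairVal x y ∧ pairVal x y ≤ 1 := by
  unfold pairVal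
  split_ifs <;> norm_num

lemma zero_lt_w_iff (u : List (Letter k)) :
    0 < w u ↔ 0 < pairSum u ∨ pairSum u = 0 ∧ ∃ b ∈ u.getLast?, b.2 = true := by
  rcases hlast : u.getLast? with _ | b
  · simp [getLast?_eq_none_iff.mp hlast, w, lastSign]
  · simp only [w, lastSign, hlast, Option.mem_def, Option.some.injEq, exists_eq_left']
    rcases lt_trichotomy (pairSum u) 0 with h | h | h
    · have : (pairSum u : ℚ) ≤ -1 := by exact_mod_cast Int.le_sub_one_of_lt h
      exact iff_of_false (by split_ifs <;> linarith) (by simp [h.ne, h.not_gt])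
    · split_ifs with hb <;> simp [h, hb]
    · have : (1 : ℚ) ≤ pairSum u := by exact_mod_cast h
      exact iff_of_true (by split_ifs <;> linarith) (.inl h)

end WeightFunction

theorem stmt14_general (k : ℕ) :
    Language.IsContextFree
      ({u | Reduced u ∧ 0 < w u} : Language (Letter k)) := by
  have hcone : ({u | Reduced u ∧ 0 < w u} : Language (Letter k)) =
      OneCounter.positiveCone (fun x y => y ≠ (x.1, !x.2)) pairVal (fun b => b.2 = true) := by
    ext u
    exact and_congr Iff.rfl (by rw [zero_lt_w_iff, pairSum_eq_edgeSum])
  rw [hcone]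
  exact OneCounter.isContextFree_positiveCone pairVal_mem_Icc

/-- the positive cone `P_k`, the set of all reduced words `u` over
`Σ_k^±` with `w u > 0`, is a context-free language. -/
theorem stmt14 (k : ℕ) (hk : 2 ≤ k) :
    Language.IsContextFree
      ({u | Reduced u ∧ 0 < w u} : Language (Letter k)) :=
  stmt14_general k
end

section
/- For every nontrivial reduced word u over {a,b,c}^± (the rank-3 lifted PL homeomorphisms of ℝ), u(0) ≠ 0; hence the group F = ⟨a,b,c⟩ ≤ Homeo_+(ℝ) acts freely on the orbit of 0 and the map u ↦ u(0) is injective on F. -/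
/-! Ping-pong on the circle `ℝ/ℤ`, cut into the seven arcs `[k/7, (k+1)/7)`. Each letter `x`
sends the complement of the arc of `x⁻¹` into its own arc (`a, b, c` to arcs `1, 2, 3`,
`C, B, A` to arcs `4, 5, 6`), while `0` lies in arc `0`, which belongs to no letter. Hence
for a nonempty reduced word `u` the arc of `u(0)` is that of the first letter of `u`: so
`u(0) ≠ 0`, and `u(0)` determines the first letter, which can be cancelled to recover `u`. -/

noncomputable def arc (t : ℝ) : ℤ := ⌊7 * Int.fract t⌋

def Letter.arc : Letter 3 → ℤ
  | (i, true) => i + 1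
  | (i, false) => 6 - i

lemma Letter.arc_pos : ∀ x : Letter 3, 0 < x.arc := by decide

lemma Letter.arc_injective : Function.Injective Letter.arc := by
  unfold Function.Injective; decide

lemma arc_add_intCast (t : ℝ) (n : ℤ) : arc (t + n) = arc t := by
  rw [arc, arc, Int.fract_add_intCast]

lemma arc_of_mem_Ico {t : ℝ} (h₀ : 0 ≤ t) (h₁ : t < 1) : arc t = ⌊7 * t⌋ := by
  rw [arc, Int.fract_eq_self.2 ⟨h₀, h₁⟩]

lemma arc_zero : arc 0 = 0 := by simp [arc]

lemma arc_eq_of_mem {t : ℝ} (n k : ℤ) (hk₀ : 0 ≤ k) (hk₁ : k < 7)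
    (h₀ : n + k / 7 ≤ t) (h₁ : t < n + (k + 1) / 7) : arc t = k := by
  have hk₀' : (0 : ℝ) ≤ k := by exact_mod_cast hk₀
  have hk₁' : (k : ℝ) + 1 ≤ 7 := by exact_mod_cast hk₁
  rw [← sub_add_cancel t n, arc_add_intCast, arc_of_mem_Ico (by linarith) (by linarith),
    Int.floor_eq_iff]
  constructor <;> linarith

lemma lt_or_le_of_arc_ne {t : ℝ} {k : ℤ} (h₀ : 0 ≤ t) (h₁ : t < 1) (h : arc t ≠ k) :
    t < k / 7 ∨ (k + 1) / 7 ≤ t := by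
  rw [arc_of_mem_Ico h₀ h₁] at h
  by_contra! hmem
  exact h (Int.floor_eq_iff.2 ⟨by linarith, by linarith⟩)

lemma s0r_eq_of_lt {n : ℤ} {x : ℝ} (h₀ : (n : ℝ) ≤ x) (h₁ : x < n + 6 / 7) :
    s0r x = n + (x - n) / 6 := by
  have hfloor : ⌊x⌋ = n := Int.floor_eq_iff.2 ⟨h₀, by linarith⟩
  rw [s0r, Int.fract, hfloor, if_pos (by linarith)]

lemma s0r_eq_of_le {n : ℤ} {x : ℝ} (h₀ : (n : ℝ) + 6 / 7 ≤ x) (h₁ : x < n + 1) :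
    s0r x = n + 6 * (x - n) - 5 := by
  have hfloor : ⌊x⌋ = n := Int.floor_eq_iff.2 ⟨by linarith, h₁⟩
  rw [s0r, Int.fract, hfloor, if_neg (by linarith)]
  ring

lemma s0rInv_eq_of_lt {n : ℤ} {y : ℝ} (h₀ : (n : ℝ) ≤ y) (h₁ : y < n + 1 / 7) :
    s0rInv y = n + 6 * (y - n) := by
  have hfloor : ⌊y⌋ = n := Int.floor_eq_iff.2 ⟨h₀, by linarith⟩
  rw [s0rInv, Int.fract, hfloor, if_pos (by linarith)]

lemma s0rInv_eq_of_le {n : ℤ} {y : ℝ} (h₀ : (n : ℝ) + 1 / 7 ≤ y) (h₁ : y < n + 1) :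
    s0rInv y = n + (y - n + 5) / 6 := by
  have hfloor : ⌊y⌋ = n := Int.floor_eq_iff.2 ⟨by linarith, h₁⟩
  rw [s0rInv, Int.fract, hfloor, if_neg (by linarith)]

lemma s0r_add_intCast (x : ℝ) (m : ℤ) : s0r (x + m) = s0r x + m := by
  rw [s0r, s0r, Int.fract_add_intCast, Int.floor_add_intCast]; push_cast; ring

lemma s0rInv_add_intCast (y : ℝ) (m : ℤ) : s0rInv (y + m) = s0rInv y + m := by
  rw [s0rInv, s0rInv, Int.fract_add_intCast, Int.floor_add_intCast]; push_cast; ring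

lemma s0rInv_s0r (x : ℝ) : s0rInv (s0r x) = x := by
  have hf₀ := Int.fract_nonneg x
  have hf₁ := Int.fract_lt_one x
  have hx : x = ⌊x⌋ + Int.fract x := (Int.floor_add_fract x).symm
  by_cases h : Int.fract x < 6 / 7
  · rw [s0r, if_pos h, s0rInv_eq_of_lt (n := ⌊x⌋) (by linarith) (by linarith)]
    linarith
  · rw [s0r, if_neg h, s0rInv_eq_of_le (n := ⌊x⌋) (by linarith) (by linarith)]
    linarith

lemma s0r_s0rInv (y : ℝ) : s0r (s0rInv y) = y := by
  have hf₀ := Int.fract_nonneg y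
  have hf₁ := Int.fract_lt_one y
  have hy : y = ⌊y⌋ + Int.fract y := (Int.floor_add_fract y).symm
  by_cases h : Int.fract y < 1 / 7
  · rw [s0rInv, if_pos h, s0r_eq_of_lt (n := ⌊y⌋) (by linarith) (by linarith)]
    linarith
  · rw [s0rInv, if_neg h, s0r_eq_of_le (n := ⌊y⌋) (by linarith) (by linarith)]
    linarith

lemma liftGenInv_liftGen (i : Fin 3) (x : ℝ) : liftGenInv i (liftGen i x) = x := by
  simp only [liftGen, liftGenInv, add_sub_cancel_right, s0rInv_s0r]

lemma liftGen_liftGenInv (i : Fin 3) (y : ℝ) : liftGen i (liftGenInv i y) = y := by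
  simp only [liftGen, liftGenInv, sub_add_cancel, s0r_s0rInv]

lemma letterAct_inv_letterAct (x : Letter 3) (t : ℝ) :
    letterAct (x.1, !x.2) (letterAct x t) = t := by
  obtain ⟨i, _ | _⟩ := x
  · exact liftGen_liftGenInv i t
  · exact liftGenInv_liftGen i t

lemma letterAct_injective (x : Letter 3) : Function.Injective (letterAct x) :=
  Function.LeftInverse.injective (letterAct_inv_letterAct x)

lemma letterAct_add_intCast (x : Letter 3) (t : ℝ) (m : ℤ) :
    letterAct x (t + m) = letterAct x t + m := by
  obtain ⟨i, _ | _⟩ := x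
  · simp only [letterAct, liftGenInv, Bool.false_eq_true, if_false]
    rw [add_sub_right_comm, s0rInv_add_intCast]
    ring
  · simp only [letterAct, liftGen, if_true]
    rw [add_right_comm, s0r_add_intCast]
    ring

lemma arc_liftGen (i : Fin 3) {t : ℝ} (h₀ : 0 ≤ t) (h₁ : t < 1) (h : arc t ≠ 6 - i) :
    arc (liftGen i t) = i + 1 := by
  -- the excluded arc is where `t + i/7` falls on the expanding branch `[6/7, 1)` of `s0r`
  have hi : ((i : ℕ) : ℝ) ≤ 2 := by exact_mod_cast Nat.le_of_lt_succ i.isLt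
  rcases lt_or_le_of_arc_ne h₀ h₁ h with hlt | hle
  · push_cast at hlt
    rw [liftGen, s0r_eq_of_lt (n := 0) (by push_cast; positivity) (by push_cast; linarith)]
    exact arc_eq_of_mem 0 _ (by positivity) (by omega) (by push_cast; linarith)
      (by push_cast; linarith)
  · push_cast at hle
    rw [liftGen, s0r_eq_of_lt (n := 1) (by push_cast; linarith) (by push_cast; linarith)]
    exact arc_eq_of_mem 1 _ (by positivity) (by omega) (by push_cast; linarith)
      (by push_cast; linarith)

lemma arc_liftGenInv (i : Fin 3) {y : ℝ} (h₀ : 0 ≤ y) (h₁ : y < 1) (h : arc y ≠ i + 1) :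
    arc (liftGenInv i y) = 6 - i := by
  -- the excluded arc is where `y - (i+1)/7` falls on the expanding branch `[0, 1/7)` of `s0rInv`
  have hi : ((i : ℕ) : ℝ) ≤ 2 := by exact_mod_cast Nat.le_of_lt_succ i.isLt
  rcases lt_or_le_of_arc_ne h₀ h₁ h with hlt | hle
  · push_cast at hlt
    rw [liftGenInv, s0rInv_eq_of_le (n := -1) (by push_cast; linarith) (by push_cast; linarith)]
    exact arc_eq_of_mem (-1) _ (by omega) (by omega) (by push_cast; linarith)
      (by push_cast; linarith)
  · push_cast at hle
    rw [liftGenInv, s0rInv_eq_of_le (n := 0) (by push_cast; linarith) (by push_cast; linarith)]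
    exact arc_eq_of_mem 0 _ (by omega) (by omega) (by push_cast; linarith)
      (by push_cast; linarith)

theorem arc_letterAct (x : Letter 3) {t : ℝ} (h : arc t ≠ Letter.arc (x.1, !x.2)) :
    arc (letterAct x t) = x.arc := by
  rw [← Int.fract_add_floor t, letterAct_add_intCast, arc_add_intCast]
  rw [← Int.fract_add_floor t, arc_add_intCast] at h
  obtain ⟨i, _ | _⟩ := x
  · exact arc_liftGenInv i (Int.fract_nonneg t) (Int.fract_lt_one t) h
  · exact arc_liftGen i (Int.fract_nonneg t) (Int.fract_lt_one t) h

theorem arc_wordAct_cons {x : Letter 3} {t : List (Letter 3)} (hu : Reduced (x :: t)) :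
    arc (wordAct (x :: t) 0) = x.arc := by
  induction t generalizing x with
  | nil => exact arc_letterAct x (by rw [wordAct, id, arc_zero]; exact (Letter.arc_pos _).ne)
  | cons y t ih =>
    obtain ⟨hxy, ht⟩ := List.isChain_cons_cons.mp hu
    exact arc_letterAct x (by rw [ih ht]; exact Letter.arc_injective.ne hxy)

theorem wordAct_zero_ne_zero {u : List (Letter 3)} (hne : u ≠ []) (hu : Reduced u) :
    wordAct u 0 ≠ 0 := by
  obtain ⟨x, t, rfl⟩ := List.exists_cons_of_ne_nil hne
  intro h
  have harc := arc_wordAct_cons hu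
  rw [h, arc_zero] at harc
  exact (Letter.arc_pos x).ne harc

theorem eq_of_wordAct_zero_eq {u v : List (Letter 3)} (hu : Reduced u) (hv : Reduced v)
    (h : wordAct u 0 = wordAct v 0) : u = v := by
  induction u generalizing v with
  | nil =>
    by_contra hne
    exact wordAct_zero_ne_zero (Ne.symm hne) hv h.symm
  | cons x t ih =>
    obtain _ | ⟨y, s⟩ := v
    · exact absurd h (wordAct_zero_ne_zero (List.cons_ne_nil x t) hu)
    have hxy : x = y := Letter.arc_injective <| by
      rw [← arc_wordAct_cons hu, ← arc_wordAct_cons hv, h]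
    subst hxy
    rw [ih (v := s) hu.tail hv.tail (letterAct_injective x h)]

/-- no nontrivial reduced word in the lifted PL homeomorphisms
`a, b, c` of `ℝ` fixes `0`; hence `F = ⟨a, b, c⟩` acts freely on the orbit of `0`
and `u ↦ u(0)` is injective. -/
theorem stmt16 :
    (∀ u : List (Letter 3), u ≠ [] → Reduced u → wordAct u 0 ≠ 0) ∧
    (∀ u v : List (Letter 3), Reduced u → Reduced v →
      wordAct u 0 = wordAct v 0 → u = v) :=
  ⟨fun _ hne hu => wordAct_zero_ne_zero hne hu, fun _ _ hu hv => eq_of_wordAct_zero_eq hu hv⟩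
end
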